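/- Let p, q > 0 and a, λ ∈ ℝ. (a) Suppose h₁ : ℝ² → ℝ is such that the function h(x,y,z) := h₁(x,z) is a minimal element of H⁺(Δ_a, λ), where Δ_a is the Laplacian with vertical drift a on Sol(p,q). Then h₁ is a minimal element of H⁺(Δ^{H(p)}_a, λ). (b) Suppose h₂ : ℝ² → ℝ is such that the function h(x,y,z) := h₂(y,−z) is a minimal element of H⁺(Δ_a, λ). Then h₂ is a minimal element of H⁺(Δ^{H(q)}_{−a}, λ). -/

import Mathlib

open Real

/-- The Laplacian with vertical drift `a` on `Sol(p,q) ≡ ℝ³`: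
`Δ_a f = (1/2)(e^{2pz} f_xx + e^{−2qz} f_yy + f_zz) + a f_z`. -/
noncomputable def solLap (p q a : ℝ) (f : ℝ × ℝ × ℝ → ℝ) (w : ℝ × ℝ × ℝ) : ℝ :=
  (1/2) * (Real.exp (2*p*w.2.2) * iteratedDeriv 2 (fun t => f (t, w.2.1, w.2.2)) w.1
    + Real.exp (-(2*q*w.2.2)) * iteratedDeriv 2 (fun t => f (w.1, t, w.2.2)) w.2.1
    + iteratedDeriv 2 (fun t => f (w.1, w.2.1, t)) w.2.2)
  + a * deriv (fun t => f (w.1, w.2.1, t)) w.2.2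

/-- The hyperbolic Laplacian with drift `b` on the logarithmic model `H(r) ≡ ℝ²`:
`Δ^{H(r)}_b g = (1/2)(e^{2rz} g_xx + g_zz) + b g_z`. -/
noncomputable def hypLap (r b : ℝ) (g : ℝ × ℝ → ℝ) (w : ℝ × ℝ) : ℝ :=
  (1/2) * (Real.exp (2*r*w.2) * iteratedDeriv 2 (fun t => g (t, w.2)) w.1
    + iteratedDeriv 2 (fun t => g (w.1, t)) w.2)
  + b * deriv (fun t => g (w.1, t)) w.2

/-- Membership in `H⁺(Δ_a, λ)` on `Sol(p,q)`: strictly positive `C²` `λ`-eigenfunction. -/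
def IsSolEigen (p q a lam : ℝ) (h : ℝ × ℝ × ℝ → ℝ) : Prop :=
  ContDiff ℝ 2 h ∧ (∀ w, 0 < h w) ∧ ∀ w, solLap p q a h w = lam * h w

/-- A minimal element of `H⁺(Δ_a, λ)` on `Sol(p,q)`: value `1` at the origin, and any
element of `H⁺(Δ_a, λ)` dominated by it is a constant multiple of it. -/
def IsSolMinimal (p q a lam : ℝ) (h : ℝ × ℝ × ℝ → ℝ) : Prop :=
  IsSolEigen p q a lam h ∧ h (0, 0, 0) = 1 ∧
    ∀ f, IsSolEigen p q a lam f → (∀ w, f w ≤ h w) → ∃ c : ℝ, ∀ w, f w = c * h w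

/-- Membership in `H⁺(Δ^{H(r)}_b, λ)`: strictly positive `C²` `λ`-eigenfunction. -/
def IsHypEigen (r b lam : ℝ) (g : ℝ × ℝ → ℝ) : Prop :=
  ContDiff ℝ 2 g ∧ (∀ w, 0 < g w) ∧ ∀ w, hypLap r b g w = lam * g w

/-- A minimal element of `H⁺(Δ^{H(r)}_b, λ)`. -/
def IsHypMinimal (r b lam : ℝ) (g : ℝ × ℝ → ℝ) : Prop :=
  IsHypEigen r b lam g ∧ g (0, 0) = 1 ∧
    ∀ f, IsHypEigen r b lam f → (∀ w, f w ≤ g w) → ∃ c : ℝ, ∀ w, f w = c * g w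

/-!
A function on `Sol(p,q)` that depends only on `(x, z)` (resp. only on `(y, -z)`) sees no
`y`-derivative (resp. no `x`-derivative), so `Δ_a` acts on it as `Δ^{H(p)}_a` (resp., after the
flip `z ↦ -z`, as `Δ^{H(q)}_{-a}`). Composition with the projection therefore identifies the
positive eigenfunctions of the hyperbolic Laplacian with the positive eigenfunctions on `Sol(p,q)`
of that form, order-preservingly; minimality passes down through a smooth section of the projection.
-/

theorem solLap_comp_xz (p q a : ℝ) (g : ℝ × ℝ → ℝ) (w : ℝ × ℝ × ℝ) :
    solLap p q a (fun w => g (w.1, w.2.2)) w = hypLap p a g (w.1, w.2.2) := by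
  simp only [solLap, hypLap, iteratedDeriv_const, OfNat.ofNat_ne_zero, if_false]
  ring

theorem solLap_comp_y_neg_z (p q a : ℝ) (g : ℝ × ℝ → ℝ) (w : ℝ × ℝ × ℝ) :
    solLap p q a (fun w => g (w.2.1, -w.2.2)) w = hypLap q (-a) g (w.2.1, -w.2.2) := by
  simp only [solLap, hypLap, iteratedDeriv_const, iteratedDeriv_comp_neg 2 (fun t => g (w.2.1, t)),
    deriv_comp_neg (f := fun t => g (w.2.1, t))]
  norm_num

section Descent

variable {p q a r b lam : ℝ} {ρ : ℝ × ℝ × ℝ → ℝ × ℝ} {g : ℝ × ℝ → ℝ}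

theorem IsHypEigen.comp (hρ : ContDiff ℝ 2 ρ)
    (hlap : ∀ g w, solLap p q a (g ∘ ρ) w = hypLap r b g (ρ w)) (hg : IsHypEigen r b lam g) :
    IsSolEigen p q a lam (g ∘ ρ) :=
  ⟨hg.1.comp hρ, fun w => hg.2.1 (ρ w), fun w => (hlap g w).trans (hg.2.2 (ρ w))⟩

theorem IsHypEigen.of_isSolEigen_comp {σ : ℝ × ℝ → ℝ × ℝ × ℝ} (hσ : ContDiff ℝ 2 σ)
    (hρσ : ∀ v, ρ (σ v) = v) (hlap : ∀ g w, solLap p q a (g ∘ ρ) w = hypLap r b g (ρ w))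
    (hg : IsSolEigen p q a lam (g ∘ ρ)) : IsHypEigen r b lam g := by
  have hg_eq : g ∘ ρ ∘ σ = g := funext fun v => congrArg g (hρσ v)
  refine ⟨hg_eq ▸ hg.1.comp hσ, fun v => hρσ v ▸ hg.2.1 (σ v), fun v => ?_⟩
  simpa only [hlap, Function.comp_apply, hρσ] using hg.2.2 (σ v)

theorem IsHypMinimal.of_isSolMinimal_comp {σ : ℝ × ℝ → ℝ × ℝ × ℝ} (hρ : ContDiff ℝ 2 ρ)
    (hσ : ContDiff ℝ 2 σ) (hρσ : ∀ v, ρ (σ v) = v) (hρ₀ : ρ (0, 0, 0) = (0, 0))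
    (hlap : ∀ g w, solLap p q a (g ∘ ρ) w = hypLap r b g (ρ w))
    (hg : IsSolMinimal p q a lam (g ∘ ρ)) : IsHypMinimal r b lam g := by
  obtain ⟨hg_eigen, hg_one, hg_min⟩ := hg
  refine ⟨.of_isSolEigen_comp hσ hρσ hlap hg_eigen, hρ₀ ▸ hg_one, fun f hf hfg => ?_⟩
  obtain ⟨c, hc⟩ := hg_min (f ∘ ρ) (hf.comp hρ hlap) fun w => hfg (ρ w)
  exact ⟨c, fun v => by simpa only [Function.comp_apply, hρσ] using hc (σ v)⟩

end Descent

theorem lift_minimal_general (p q a lam : ℝ) :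
    (∀ h₁ : ℝ × ℝ → ℝ,
      IsSolMinimal p q a lam (fun w => h₁ (w.1, w.2.2)) → IsHypMinimal p a lam h₁)
    ∧
    (∀ h₂ : ℝ × ℝ → ℝ,
      IsSolMinimal p q a lam (fun w => h₂ (w.2.1, -w.2.2)) → IsHypMinimal q (-a) lam h₂) :=
  ⟨fun _ => IsHypMinimal.of_isSolMinimal_comp (σ := fun v => (v.1, 0, v.2))
      (by fun_prop) (by fun_prop) (fun _ => rfl) rfl (solLap_comp_xz p q a),
    fun _ => IsHypMinimal.of_isSolMinimal_comp (σ := fun v => (0, v.1, -v.2))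
      (by fun_prop) (by fun_prop) (fun _ => by simp) (by simp) (solLap_comp_y_neg_z p q a)⟩

theorem lift_minimal (p q a lam : ℝ) (hp : 0 < p) (hq : 0 < q) :
    (∀ h₁ : ℝ × ℝ → ℝ,
      IsSolMinimal p q a lam (fun w => h₁ (w.1, w.2.2)) → IsHypMinimal p a lam h₁)
    ∧
    (∀ h₂ : ℝ × ℝ → ℝ,
      IsSolMinimal p q a lam (fun w => h₂ (w.2.1, -w.2.2)) → IsHypMinimal q (-a) lam h₂) :=
  lift_minimal_general p q a lam
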